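/- arXiv:2509.23825 — 4 statements merged into one kernel-verified Lean document; each statement's English description precedes it below -/
import Mathlib

section
/- Let a Markov chain on a finite set V have transition probabilities p(v'|v) = f(v,v')/∑_{w} f(v,w) where f: V×V → ℝ≥0 is a unit flow from a source distribution p to a sink set V_snk (i.e., f satisfies flow conservation at interior nodes, total inflow at each source v equals p(v), and total absorption at each sink v equals q(v), with ∑ p = ∑ q = 1). If all such walks terminate at sinks almost surely, then the distribution of the terminal vertex of the walk started at a p-distributed initial vertex is exactly q. -/
open Filter

/-- A Markov chain moving proportionally to a unit flow `f` from a source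
distribution `p` to sinks carrying `q` (terminating at a sink `v` with probability
`q v / (q v + ∑ f v ·)`), if it terminates almost surely, has terminal distribution `q`.
The walk is encoded by the evolution of the unabsorbed mass `μ n` and absorbed mass `a n`. -/
theorem terminal_distribution_eq_q
    {V : Type*} [Fintype V] [DecidableEq V]
    (Vsrc Vsnk : Finset V) (hdisj : Disjoint Vsrc Vsnk)
    (f : V → V → ℝ) (hf : ∀ v w, 0 ≤ f v w)
    (p q : V → ℝ) (hp0 : ∀ v, 0 ≤ p v) (hq0 : ∀ v, 0 ≤ q v)
    (hpsupp : ∀ v ∉ Vsrc, p v = 0) (hqsupp : ∀ v ∉ Vsnk, q v = 0)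
    (hp1 : ∑ v, p v = 1) (hq1 : ∑ v, q v = 1)
    (hcons : ∀ v, (∑ u, f u v) + p v = (∑ w, f v w) + q v)
    (prob : V → V → ℝ) (term : V → ℝ)
    (hprob : ∀ v w, prob v w = f v w / (q v + ∑ w', f v w'))
    (hterm : ∀ v, term v = q v / (q v + ∑ w', f v w'))
    (μ a : ℕ → V → ℝ)
    (hμ0 : μ 0 = p) (ha0 : a 0 = 0)
    (hμ : ∀ n w, μ (n + 1) w = ∑ v, μ n v * prob v w)
    (ha : ∀ n y, a (n + 1) y = a n y + μ n y * term y)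
    (hterminate : ∀ v, Tendsto (fun n => μ n v) atTop (nhds 0)) :
    ∀ y, Tendsto (fun n => a n y) atTop (nhds (q y)) := by
  -- total capacity at each vertex
  set d : V → ℝ := fun v => q v + ∑ w, f v w with hd
  have hd0 : ∀ v, 0 ≤ d v := fun v =>
    add_nonneg (hq0 v) (Finset.sum_nonneg fun w _ => hf v w)
  have hfsum0 : ∀ v, d v = 0 → (q v = 0 ∧ ∀ w, f v w = 0) := by
    intro v hv
    simp only [hd] at hv
    have hs : 0 ≤ ∑ w, f v w := Finset.sum_nonneg fun w _ => hf v w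
    refine ⟨by linarith [hq0 v], fun w => ?_⟩
    have hsum0 : ∑ w', f v w' = 0 := by linarith [hq0 v]
    have := (Finset.sum_eq_zero_iff_of_nonneg (fun w _ => hf v w)).1 hsum0
    exact this w (Finset.mem_univ w)
  have hprob0 : ∀ v w, 0 ≤ prob v w := by
    intro v w; rw [hprob]; exact div_nonneg (hf v w) (hd0 v)
  have hterm0 : ∀ v, 0 ≤ term v := by
    intro v; rw [hterm]; exact div_nonneg (hq0 v) (hd0 v)
  have hkey : ∀ v w, d v * prob v w = f v w := by
    intro v w
    rcases eq_or_lt_of_le (hd0 v) with h | h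
    · rw [← h, zero_mul, (hfsum0 v h.symm).2 w]
    · rw [hprob]; field_simp [hd] at h ⊢
      exact mul_div_cancel_left₀ (f v w) (ne_of_gt h)
  -- nonnegativity of μ
  have hμnn : ∀ n v, 0 ≤ μ n v := by
    intro n
    induction n with
    | zero => intro v; rw [hμ0]; exact hp0 v
    | succ n ih =>
      intro v; rw [hμ]
      exact Finset.sum_nonneg fun u _ => mul_nonneg (ih u) (hprob0 u v)
  -- partial absorbed / remaining mass
  set s : ℕ → V → ℝ := fun n v => ∑ k ∈ Finset.range n, μ k v with hs
  set e : ℕ → V → ℝ := fun n v => d v - s n v with he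
  have hssucc : ∀ n v, s (n + 1) v = s n v + μ n v := by
    intro n v; simp [hs, Finset.sum_range_succ]
  -- recursion for e
  have herec : ∀ n w, e (n + 1) w = ∑ v, e n v * prob v w := by
    intro n w
    have h1 : ∑ v, e n v * prob v w
        = (∑ v, f v w) - ∑ v, s n v * prob v w := by
      rw [← Finset.sum_sub_distrib]
      refine Finset.sum_congr rfl fun v _ => ?_
      rw [he]; simp only
      rw [sub_mul, hkey]
    have h2 : ∀ m, s m w = p w + ∑ v, s (m-1+1-1) v * prob v w → True := fun _ _ => trivial
    have h3 : s (n + 1) w = p w + ∑ v, s n v * prob v w := by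
      have : ∀ m, μ (m + 1) w = ∑ v, μ m v * prob v w := fun m => hμ m w
      calc s (n + 1) w = μ 0 w + ∑ k ∈ Finset.range n, μ (k + 1) w := by
            simp [hs, Finset.sum_range_succ', add_comm]
        _ = p w + ∑ k ∈ Finset.range n, ∑ v, μ k v * prob v w := by
            rw [hμ0]
            congr 1
            exact Finset.sum_congr rfl fun k _ => hμ k w
        _ = p w + ∑ v, (∑ k ∈ Finset.range n, μ k v) * prob v w := by
            rw [Finset.sum_comm]
            simp [Finset.sum_mul]
        _ = p w + ∑ v, s n v * prob v w := rfl
    have h4 : d w = (∑ v, f v w) + p w := by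
      rw [hd]; simp only
      have := hcons w
      linarith
    rw [h1, he]; simp only
    rw [h3, h4]; ring
  -- e nonneg
  have henn : ∀ n v, 0 ≤ e n v := by
    intro n
    induction n with
    | zero => intro v; simp [he, hs]; exact hd0 v
    | succ n ih =>
      intro v; rw [herec]
      exact Finset.sum_nonneg fun u _ => mul_nonneg (ih u) (hprob0 u v)
  -- e antitone
  have hanti : ∀ v, Antitone fun n => e n v := by
    intro v
    apply antitone_nat_of_succ_le
    intro n
    have : e (n + 1) v = e n v - μ n v := by
      rw [he]; simp only [hssucc]; ring
    rw [this]
    linarith [hμnn n v]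
  -- limit E
  set E : V → ℝ := fun v => ⨅ n, e n v with hE
  have hbdd : ∀ v, BddBelow (Set.range fun n => e n v) :=
    fun v => ⟨0, by rintro x ⟨n, rfl⟩; exact henn n v⟩
  have hEt : ∀ v, Tendsto (fun n => e n v) atTop (nhds (E v)) :=
    fun v => tendsto_atTop_ciInf (hanti v) (hbdd v)
  have hEnn : ∀ v, 0 ≤ E v := fun v => le_ciInf fun n => henn n v
  -- E is a fixed point
  have hEfix : ∀ w, E w = ∑ v, E v * prob v w := by
    intro w
    have t1 : Tendsto (fun n => e (n + 1) w) atTop (nhds (E w)) :=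
      (hEt w).comp (tendsto_add_atTop_nat 1)
    have t2 : Tendsto (fun n => ∑ v, e n v * prob v w) atTop
        (nhds (∑ v, E v * prob v w)) :=
      tendsto_finset_sum _ fun v _ => (hEt v).mul_const _
    have : Tendsto (fun n => e (n + 1) w) atTop (nhds (∑ v, E v * prob v w)) := by
      simpa only [herec] using t2
    exact tendsto_nhds_unique t1 this
  -- sum of probabilities bound
  have hprobsum : ∀ v, (∑ w, prob v w) ≤ 1 - term v := by
    intro v
    rcases eq_or_lt_of_le (hd0 v) with h | h
    · have h0 := hfsum0 v h.symm
      have : ∀ w, prob v w = 0 := by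
        intro w; rw [hprob, h0.2 w, zero_div]
      have ht : term v = 0 := by rw [hterm, h0.1, zero_div]
      simp [this, ht]
    · have hne : d v ≠ 0 := ne_of_gt h
      have : ∑ w, prob v w = (∑ w, f v w) / d v := by
        rw [Finset.sum_div]
        exact Finset.sum_congr rfl fun w _ => hprob v w
      rw [this, hterm]
      rw [hd] at hne ⊢
      field_simp
      exact le_of_eq (by ring)
  -- leaked mass at fixed point is zero
  have hleak : ∀ v, E v * term v = 0 := by
    have hsumle : ∑ v, E v ≤ ∑ v, E v * (1 - term v) := by
      calc ∑ v, E v = ∑ w, ∑ v, E v * prob v w := by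
            exact Finset.sum_congr rfl fun w _ => hEfix w
        _ = ∑ v, E v * ∑ w, prob v w := by
            rw [Finset.sum_comm]
            simp [Finset.mul_sum]
        _ ≤ ∑ v, E v * (1 - term v) :=
            Finset.sum_le_sum fun v _ =>
              mul_le_mul_of_nonneg_left (hprobsum v) (hEnn v)
    have hsum0 : ∑ v, E v * term v ≤ 0 := by
      have : ∑ v, E v * (1 - term v) = (∑ v, E v) - ∑ v, E v * term v := by
        rw [← Finset.sum_sub_distrib]
        exact Finset.sum_congr rfl fun v _ => by ring
      linarith [hsumle, this ▸ hsumle]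
    have hnn : ∀ v ∈ Finset.univ, 0 ≤ E v * term v :=
      fun v _ => mul_nonneg (hEnn v) (hterm0 v)
    have := Finset.sum_nonneg hnn
    have heq : ∑ v, E v * term v = 0 := le_antisymm hsum0 this
    intro v
    exact (Finset.sum_eq_zero_iff_of_nonneg hnn).1 heq v (Finset.mem_univ v)
  -- a n y = term y * s n y
  have haeq : ∀ n y, a n y = term y * s n y := by
    intro n
    induction n with
    | zero => intro y; simp [ha0, hs]
    | succ n ih =>
      intro y
      rw [ha, ih, hssucc]; ring
  intro y
  have hfinal : term y * d y = q y := by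
    rcases eq_or_lt_of_le (hd0 y) with h | h
    · rw [← h, mul_zero, (hfsum0 y h.symm).1]
    · rw [hterm, hd]
      rw [hd] at h
      field_simp
  have : Tendsto (fun n => term y * (d y - e n y)) atTop
      (nhds (term y * (d y - E y))) :=
    (tendsto_const_nhds.sub (hEt y)).const_mul _
  have heqfun : (fun n => a n y) = fun n => term y * (d y - e n y) := by
    funext n
    rw [haeq n y, he]; ring
  rw [heqfun]
  have : term y * (d y - E y) = q y := by
    have := hleak y
    nlinarith [hfinal]
  rw [← this]
  exact (tendsto_const_nhds.sub (hEt y)).const_mul _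
end

section
/- For γ > 1 and L ≥ 1, the unique solution of the system γφ₀ − φ₁ = r, −φ_{ℓ−1} + 2γφ_ℓ − φ_{ℓ+1} = 0 for 1 ≤ ℓ ≤ L−1, −φ_{L−1} + γφ_L = −r is φ_ℓ = r·( T_ℓ(γ)·(γU_{L−1}(γ) − U_{L−2}(γ) − 1)/(γT_L(γ) − T_{L−1}(γ)) − U_{ℓ−1}(γ) ), where U_{−1} ≡ 0. -/
open Polynomial Polynomial.Chebyshev


lemma Taux (γ : ℝ) (hγ : 1 < γ) : ∀ n : ℕ,
    1 ≤ (T ℝ n).eval γ ∧ (T ℝ (n:ℤ)).eval γ < (T ℝ ((n:ℤ)+1)).eval γ := by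
  intro n
  induction n with
  | zero => simp [hγ]
  | succ m ih =>
    obtain ⟨h1, h2⟩ := ih
    have h3 : (1:ℝ) ≤ (T ℝ ((m:ℤ)+1)).eval γ := le_of_lt (lt_of_le_of_lt h1 h2)
    constructor
    · push_cast; exact h3
    · have hrec := T_add_two ℝ (m : ℤ)
      have : (T ℝ ((m:ℤ)+2)).eval γ = 2 * γ * (T ℝ ((m:ℤ)+1)).eval γ - (T ℝ (m:ℤ)).eval γ := by
        rw [hrec]; simp
      push_cast
      rw [show ((m:ℤ)+1+1 = (m:ℤ)+2) by ring, this]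
      nlinarith

lemma Dpos (γ : ℝ) (hγ : 1 < γ) (m : ℕ) :
    0 < γ * (T ℝ ((m:ℤ)+1)).eval γ - (T ℝ (m:ℤ)).eval γ := by
  obtain ⟨h1, h2⟩ := Taux γ hγ m
  nlinarith

lemma gen_formula (γ r : ℝ) (L : ℕ) (φ : ℕ → ℝ)
    (h0 : γ * φ 0 - φ 1 = r)
    (hrec : ∀ ℓ : ℕ, ℓ + 2 ≤ L → -φ ℓ + 2 * γ * φ (ℓ + 1) - φ (ℓ + 2) = 0) :
    ∀ ℓ ≤ L, φ ℓ = (T ℝ (ℓ:ℤ)).eval γ * φ 0 - r * (U ℝ ((ℓ:ℤ)-1)).eval γ := by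
  intro ℓ
  induction ℓ using Nat.strong_induction_on with
  | _ ℓ ih =>
    match ℓ with
    | 0 => intro _; simp [Chebyshev.U_neg_one]
    | 1 => intro _; simp; linarith
    | (k+2) =>
      intro hk
      have e1 := ih k (by omega) (by omega)
      have e2 := ih (k+1) (by omega) (by omega)
      have e3 := hrec k hk
      have hT : (T ℝ ((k:ℤ)+2)).eval γ = 2*γ*(T ℝ ((k:ℤ)+1)).eval γ - (T ℝ (k:ℤ)).eval γ := by
        rw [T_add_two]; simp
      have hU : (U ℝ ((k:ℤ)+1)).eval γ = 2*γ*(U ℝ (k:ℤ)).eval γ - (U ℝ ((k:ℤ)-1)).eval γ := by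
        have := U_add_two ℝ ((k:ℤ)-1)
        rw [show ((k:ℤ)-1+2 = (k:ℤ)+1) by ring, show ((k:ℤ)-1+1 = (k:ℤ)) by ring] at this
        rw [this]; simp
      push_cast at e2 ⊢
      rw [show ((k:ℤ)+2-1 : ℤ) = (k:ℤ)+1 by ring] 
      rw [show ((k:ℤ)+1-1 : ℤ) = (k:ℤ) by ring] at e2
      rw [hT, hU]
      linear_combination -e3 + 2*γ*e2 - e1

/-- For `γ > 1` and `L ≥ 1`, the unique solution of the system
`γφ₀ − φ₁ = r`, `−φ_{ℓ−1} + 2γφ_ℓ − φ_{ℓ+1} = 0` (`1 ≤ ℓ ≤ L−1`), `−φ_{L−1} + γφ_L = −r`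
is `φ_ℓ = r·(T_ℓ(γ)(γU_{L−1}(γ) − U_{L−2}(γ) − 1)/(γT_L(γ) − T_{L−1}(γ)) − U_{ℓ−1}(γ))`. -/
theorem unique_solution_coincident_source_sink
    (γ r : ℝ) (hγ : 1 < γ) (hr : 0 < r) (L : ℕ) (hL : 1 ≤ L) :
    let sol : ℕ → ℝ := fun ℓ =>
      r * ((Polynomial.Chebyshev.T ℝ (ℓ : ℤ)).eval γ *
        ((γ * (Polynomial.Chebyshev.U ℝ ((L : ℤ) - 1)).eval γ -
            (Polynomial.Chebyshev.U ℝ ((L : ℤ) - 2)).eval γ - 1) /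
          (γ * (Polynomial.Chebyshev.T ℝ (L : ℤ)).eval γ -
            (Polynomial.Chebyshev.T ℝ ((L : ℤ) - 1)).eval γ)) -
        (Polynomial.Chebyshev.U ℝ ((ℓ : ℤ) - 1)).eval γ)
    (∀ φ : ℕ → ℝ,
        (γ * φ 0 - φ 1 = r ∧
          (∀ ℓ : ℕ, ℓ + 2 ≤ L → -φ ℓ + 2 * γ * φ (ℓ + 1) - φ (ℓ + 2) = 0) ∧
          -φ (L - 1) + γ * φ L = -r) →
        ∀ ℓ ≤ L, φ ℓ = sol ℓ) ∧
    (γ * sol 0 - sol 1 = r ∧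
      (∀ ℓ : ℕ, ℓ + 2 ≤ L → -sol ℓ + 2 * γ * sol (ℓ + 1) - sol (ℓ + 2) = 0) ∧
      -sol (L - 1) + γ * sol L = -r) := by
  obtain ⟨m, rfl⟩ : ∃ m, L = m + 1 := ⟨L - 1, by omega⟩
  intro sol
  have hcast1 : ((m + 1 : ℕ) : ℤ) - 1 = (m : ℤ) := by push_cast; ring
  have hcast2 : ((m + 1 : ℕ) : ℤ) - 2 = (m : ℤ) - 1 := by push_cast; ring
  have hcastL : ((m + 1 : ℕ) : ℤ) = (m : ℤ) + 1 := by push_cast; ring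
  set N : ℝ := γ * (U ℝ (m:ℤ)).eval γ - (U ℝ ((m:ℤ)-1)).eval γ - 1 with hN
  set D : ℝ := γ * (T ℝ ((m:ℤ)+1)).eval γ - (T ℝ (m:ℤ)).eval γ with hDdef
  have hD : 0 < D := Dpos γ hγ m
  have hD' : D ≠ 0 := ne_of_gt hD
  have hsol : ∀ ℓ : ℕ, sol ℓ =
      r * ((T ℝ (ℓ:ℤ)).eval γ * (N / D) - (U ℝ ((ℓ:ℤ)-1)).eval γ) := by
    intro ℓ
    simp only [sol, hcastL, show ((m:ℤ)+1-1 = (m:ℤ)) by ring,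
      show ((m:ℤ)+1-2 = (m:ℤ)-1) by ring, hN, hDdef]
  constructor
  · rintro φ ⟨h0, hrec, hlast⟩ ℓ hℓ
    have F := gen_formula γ r (m+1) φ h0 hrec
    have fm := F m (by omega)
    have fM := F (m+1) (by omega)
    rw [show (m+1-1 : ℕ) = m from rfl] at hlast
    rw [show (((m+1:ℕ)):ℤ) = (m:ℤ)+1 from hcastL,
      show ((m:ℤ)+1-1 : ℤ) = (m:ℤ) by ring] at fM
    have hφ0 : φ 0 * D = r * N := by
      rw [fm, fM] at hlast
      rw [hN, hDdef]; linear_combination hlast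
    have hφ0' : φ 0 = r * (N / D) := by
      rw [mul_div_assoc' r N D, eq_div_iff hD']
      linear_combination hφ0
    rw [F ℓ hℓ, hsol ℓ, hφ0']
    ring
  · refine ⟨?_, ?_, ?_⟩
    · rw [hsol 0, hsol 1]
      simp [Chebyshev.U_neg_one]
      ring
    · intro ℓ _
      rw [hsol ℓ, hsol (ℓ+1), hsol (ℓ+2)]
      have hT : (T ℝ ((ℓ:ℤ)+2)).eval γ = 2*γ*(T ℝ ((ℓ:ℤ)+1)).eval γ - (T ℝ (ℓ:ℤ)).eval γ := by
        rw [T_add_two]; simp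
      have hU : (U ℝ ((ℓ:ℤ)+1)).eval γ = 2*γ*(U ℝ (ℓ:ℤ)).eval γ - (U ℝ ((ℓ:ℤ)-1)).eval γ := by
        have := U_add_two ℝ ((ℓ:ℤ)-1)
        rw [show ((ℓ:ℤ)-1+2 = (ℓ:ℤ)+1) by ring, show ((ℓ:ℤ)-1+1 = (ℓ:ℤ)) by ring] at this
        rw [this]; simp
      push_cast
      rw [show ((ℓ:ℤ)+2-1 : ℤ) = (ℓ:ℤ)+1 by ring, show ((ℓ:ℤ)+1-1 : ℤ) = (ℓ:ℤ) by ring,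
        hT, hU]
      ring
    · rw [show (m+1-1 : ℕ) = m from rfl, hsol m, hsol (m+1)]
      rw [show (((m+1:ℕ)):ℤ) = (m:ℤ)+1 from hcastL, show ((m:ℤ)+1-1 : ℤ) = (m:ℤ) by ring]
      have hcd : N / D * D = N := div_mul_cancel₀ N hD'
      rw [hN] at hcd
      rw [hDdef] at hcd
      linear_combination r * hcd
end

section
/- In the L-partite circuit with source layer 0 and sink layer L, single source x₀ ≠ x_L: the potentials given by φ_ℓ(x₀) = T_{L−ℓ}(γ)r/(γT_L(γ)−T_{L−1}(γ)), φ_ℓ(x_L) = −T_ℓ(γ)r/(γT_L(γ)−T_{L−1}(γ)), and φ_ℓ(x') = 0 for all other states, satisfy Kirchhoff's conservation law at every interior node of the simplified (large-n limit) node-voltage system: γφ₀(x) − φ₁(x) = r·1[x=x₀]; −φ_{ℓ−1}(x) + 2γφ_ℓ(x) − φ_{ℓ+1}(x) = 0 for 1 ≤ ℓ ≤ L−1; −φ_{L−1}(x) + γφ_L(x) = −r·1[x=x_L]. -/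
open Polynomial

private lemma cheb_rec (γ : ℝ) (n : ℤ) :
    (Polynomial.Chebyshev.T ℝ (n + 2)).eval γ =
      2 * γ * (Polynomial.Chebyshev.T ℝ (n + 1)).eval γ
        - (Polynomial.Chebyshev.T ℝ n).eval γ := by
  simp [Polynomial.Chebyshev.T_add_two]

private lemma cheb_grow {γ : ℝ} (hγ : 1 ≤ γ) :
    ∀ n : ℕ, 1 ≤ (Polynomial.Chebyshev.T ℝ (n : ℤ)).eval γ ∧
      (Polynomial.Chebyshev.T ℝ (n : ℤ)).eval γ ≤
        (Polynomial.Chebyshev.T ℝ ((n : ℤ) + 1)).eval γ := by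
  intro n
  induction n with
  | zero => simpa [Polynomial.Chebyshev.T_zero, Polynomial.Chebyshev.T_one] using hγ
  | succ k ih =>
    obtain ⟨h1, h2⟩ := ih
    have h1' : (1:ℝ) ≤ (Polynomial.Chebyshev.T ℝ ((k : ℤ) + 1)).eval γ := le_trans h1 h2
    constructor
    · push_cast; exact h1'
    · push_cast
      have key : (Polynomial.Chebyshev.T ℝ ((k:ℤ) + 1 + 1)).eval γ =
          2 * γ * (Polynomial.Chebyshev.T ℝ ((k:ℤ) + 1)).eval γ
            - (Polynomial.Chebyshev.T ℝ (k:ℤ)).eval γ := by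
        have h := cheb_rec γ (k : ℤ)
        convert h using 3
        ring
      rw [key]
      nlinarith

/-- In the L-partite circuit (large-`n` limit node-voltage system) with a
single unit current entering at `x₀` in layer `0` and leaving at `x_L ≠ x₀` in layer `L`,
the potentials `φ_ℓ(x₀) = T_{L−ℓ}(γ)r/(γT_L(γ)−T_{L−1}(γ))`,
`φ_ℓ(x_L) = −T_ℓ(γ)r/(γT_L(γ)−T_{L−1}(γ))`, and `φ_ℓ(x') = 0` otherwise, where
`γ = 1 + r·n/R`, satisfy the simplified node-voltage equations at all nodes. -/
theorem single_source_sink_potentials_solve_circuit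
    {X : Type*} [Fintype X] [DecidableEq X]
    (x₀ xL : X) (hne : x₀ ≠ xL)
    (r R : ℝ) (hr : 0 < r) (hR : 0 < R)
    (γ : ℝ) (hγ : γ = 1 + r * (Fintype.card X : ℝ) / R)
    (L : ℕ) (hL : 1 ≤ L)
    (φ : ℕ → X → ℝ)
    (hφ : ∀ (ℓ : ℕ) (x : X), φ ℓ x =
      if x = x₀ then
        (Polynomial.Chebyshev.T ℝ ((L : ℤ) - (ℓ : ℤ))).eval γ * r /
          (γ * (Polynomial.Chebyshev.T ℝ (L : ℤ)).eval γ -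
            (Polynomial.Chebyshev.T ℝ ((L : ℤ) - 1)).eval γ)
      else if x = xL then
        -((Polynomial.Chebyshev.T ℝ (ℓ : ℤ)).eval γ) * r /
          (γ * (Polynomial.Chebyshev.T ℝ (L : ℤ)).eval γ -
            (Polynomial.Chebyshev.T ℝ ((L : ℤ) - 1)).eval γ)
      else 0) :
    (∀ x : X, γ * φ 0 x - φ 1 x = if x = x₀ then r else 0) ∧
    (∀ (ℓ : ℕ) (x : X), ℓ + 2 ≤ L →
      -φ ℓ x + 2 * γ * φ (ℓ + 1) x - φ (ℓ + 2) x = 0) ∧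
    (∀ x : X, -φ (L - 1) x + γ * φ L x = if x = xL then -r else 0) := by
  have hcard : 1 ≤ (Fintype.card X : ℝ) := by
    exact_mod_cast Fintype.card_pos_iff.mpr ⟨x₀⟩
  have hγ1 : 1 < γ := by
    rw [hγ]
    have : 0 < r * (Fintype.card X : ℝ) / R := by positivity
    linarith
  have hgrow := cheb_grow (le_of_lt hγ1)
  have hL1 : ((L - 1 : ℕ) : ℤ) = (L : ℤ) - 1 := by
    push_cast [Nat.cast_sub hL]; ring
  have hTL1 : (Polynomial.Chebyshev.T ℝ ((L:ℤ) - 1)).eval γ ≤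
      (Polynomial.Chebyshev.T ℝ (L:ℤ)).eval γ := by
    have h := (hgrow (L - 1)).2
    rw [hL1] at h
    simpa using h
  have hTL1pos : (1:ℝ) ≤ (Polynomial.Chebyshev.T ℝ ((L:ℤ) - 1)).eval γ := by
    have h := (hgrow (L - 1)).1; rwa [hL1] at h
  have hD0 : γ * (Polynomial.Chebyshev.T ℝ (L:ℤ)).eval γ -
      (Polynomial.Chebyshev.T ℝ ((L:ℤ) - 1)).eval γ ≠ 0 := by
    have : 0 < (γ - 1) * (Polynomial.Chebyshev.T ℝ ((L:ℤ) - 1)).eval γ := by nlinarith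
    nlinarith
  have hT0 : (Polynomial.Chebyshev.T ℝ (0:ℤ)).eval γ = 1 := by
    simp [Polynomial.Chebyshev.T_zero]
  have hT1 : (Polynomial.Chebyshev.T ℝ (1:ℤ)).eval γ = γ := by
    simp [Polynomial.Chebyshev.T_one]
  refine ⟨?_, ?_, ?_⟩
  · intro x
    rcases eq_or_ne x x₀ with h0 | h0
    · subst h0
      simp only [hφ, if_pos rfl, if_pos]
      simp only [Nat.cast_zero, Nat.cast_one, sub_zero]
      field_simp
    · rcases eq_or_ne x xL with hLx | hLx
      · subst hLx
        simp only [hφ, if_neg (Ne.symm hne), if_pos rfl, if_neg h0, ↓reduceIte, Nat.cast_zero,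
          Nat.cast_one, hT0, hT1]
        field_simp
        ring
      · simp [hφ, h0, hLx]
  · intro ℓ x hℓ
    rcases eq_or_ne x x₀ with h0 | h0
    · subst h0
      simp only [hφ, if_pos rfl, ↓reduceIte]
      have e2 : (L:ℤ) - ((ℓ+1 : ℕ) : ℤ) = ((L:ℤ) - (ℓ:ℤ) - 2) + 1 := by push_cast; ring
      have e3 : (L:ℤ) - ((ℓ+2 : ℕ) : ℤ) = (L:ℤ) - (ℓ:ℤ) - 2 := by push_cast; ring
      rw [e2, e3]
      have key := cheb_rec γ ((L:ℤ) - (ℓ:ℤ) - 2)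
      have e1 : (L:ℤ) - (ℓ:ℤ) - 2 + 2 = (L:ℤ) - (ℓ:ℤ) := by ring
      rw [e1] at key
      rw [key]
      field_simp
      ring
    · rcases eq_or_ne x xL with hLx | hLx
      · subst hLx
        simp only [hφ, if_neg h0, if_pos rfl, ↓reduceIte]
        have e2 : (((ℓ+2 : ℕ)) : ℤ) = (ℓ:ℤ) + 2 := by push_cast; ring
        have e1 : (((ℓ+1 : ℕ)) : ℤ) = (ℓ:ℤ) + 1 := by push_cast; ring
        rw [e1, e2, cheb_rec γ (ℓ:ℤ)]
        field_simp
        ring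
      · simp [hφ, h0, hLx]
  · intro x
    rcases eq_or_ne x x₀ with h0 | h0
    · subst h0
      simp only [hφ, if_pos rfl, if_neg hne, ↓reduceIte]
      have e1 : (L:ℤ) - ((L-1:ℕ):ℤ) = 1 := by rw [hL1]; ring
      have e2 : (L:ℤ) - ((L:ℕ):ℤ) = 0 := by ring
      rw [e1, e2, hT0, hT1]
      field_simp
      ring
    · rcases eq_or_ne x xL with hLx | hLx
      · subst hLx
        simp only [hφ, if_neg h0, if_pos rfl, if_neg (Ne.symm hne), hL1, ↓reduceIte]
        field_simp
        ring
      · simp [hφ, h0, hLx]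
end

section
/- Let f: V×V → ℝ≥0 be a flow on a finite directed acyclic graph with conservation at interior nodes, unit total source inflow distributed as a probability measure p on source nodes and unit total sink outflow q on sink nodes. Define an absorbing Markov chain as in the movement rule (transition probabilities proportional to outgoing flow, termination at sinks with probability proportional to extracted current). Then for every sink node y, the absorption probability at y starting from initial distribution p equals q(y). -/
open Filter

private def Hiter {V : Type*} [Fintype V] (prob : V → V → ℝ) (δ : V → ℝ) : ℕ → V → ℝ
  | 0 => fun _ => 0
  | (k+1) => fun v => δ v + ∑ w, prob v w * Hiter prob δ k w

private lemma Hiter_succ_eq {V : Type*} [Fintype V] (prob : V → V → ℝ) (δ : V → ℝ)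
    (ord : V → ℕ) (N : ℕ) (hbnd : ∀ v, ord v ≤ N)
    (hord : ∀ v w, prob v w ≠ 0 → ord v < ord w) :
    ∀ k v, N < k + ord v → Hiter prob δ (k+1) v = Hiter prob δ k v := by
  intro k
  induction k with
  | zero =>
    intro v hv
    exact absurd hv (by simpa using hbnd v)
  | succ k ih =>
    intro v hv
    show δ v + ∑ w, prob v w * Hiter prob δ (k+1) w
        = δ v + ∑ w, prob v w * Hiter prob δ k w
    congr 1
    refine Finset.sum_congr rfl fun w _ => ?_
    by_cases hpw : prob v w = 0
    · simp [hpw]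
    · rw [ih w (by have := hord v w hpw; omega)]

/-- For a unit flow `f` on a finite DAG (witnessed by a topological order)
from a source distribution `p` to sinks carrying `q`, the absorbing Markov chain given by
the movement rule (transitions proportional to outgoing flow, termination at a sink `v`
with probability `q v / (q v + ∑ f v ·)`) absorbs at each sink `y` with probability
exactly `q y`, when started from the initial distribution `p`.  The walk is encoded by
the unabsorbed mass `μ n` and the absorbed mass `a n`. -/
theorem dag_flow_absorption_probability_eq_q
    {V : Type*} [Fintype V] [DecidableEq V]
    (E : V → V → Prop)
    (ord : V → ℕ) (hdag : ∀ v w, E v w → ord v < ord w)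
    (Vsrc Vsnk : Finset V) (hdisj : Disjoint Vsrc Vsnk)
    (f : V → V → ℝ) (hf : ∀ v w, 0 ≤ f v w)
    (hsupp : ∀ v w, ¬ E v w → f v w = 0)
    (p q : V → ℝ) (hp0 : ∀ v, 0 ≤ p v) (hq0 : ∀ v, 0 ≤ q v)
    (hpsupp : ∀ v ∉ Vsrc, p v = 0) (hqsupp : ∀ v ∉ Vsnk, q v = 0)
    (hp1 : ∑ v, p v = 1) (hq1 : ∑ v, q v = 1)
    (hcons : ∀ v, (∑ u, f u v) + p v = (∑ w, f v w) + q v)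
    (prob : V → V → ℝ) (term : V → ℝ)
    (hprob : ∀ v w, prob v w = f v w / (q v + ∑ w', f v w'))
    (hterm : ∀ v, term v = q v / (q v + ∑ w', f v w'))
    (μ a : ℕ → V → ℝ)
    (hμ0 : μ 0 = p) (ha0 : a 0 = 0)
    (hμ : ∀ n w, μ (n + 1) w = ∑ v, μ n v * prob v w)
    (ha : ∀ n y, a (n + 1) y = a n y + μ n y * term y) :
    ∀ y ∈ Vsnk, Tendsto (fun n => a n y) atTop (nhds (q y)) := by
  intro y hy
  set N := Finset.univ.sup ord with hN
  have hbnd : ∀ v, ord v ≤ N := fun v => Finset.le_sup (Finset.mem_univ v)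
  have hord : ∀ v w, prob v w ≠ 0 → ord v < ord w := by
    intro v w hpw
    have hfvw : f v w ≠ 0 := by
      intro h; exact hpw (by rw [hprob, h, zero_div])
    exact hdag v w (by by_contra hE; exact hfvw (hsupp v w hE))
  set δ : V → ℝ := fun v => if v = y then term v else 0 with hδ
  set h : V → ℝ := Hiter prob δ (N+1) with hh
  have hfix : ∀ v, h v = δ v + ∑ w, prob v w * h w := by
    intro v
    have := Hiter_succ_eq prob δ ord N hbnd hord (N+1) v (by omega)
    rw [hh, ← this]
    rfl
  have hout : ∀ v, (q v + ∑ w, f v w) * h v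
      = (if v = y then q v else 0) + ∑ w, f v w * h w := by
    intro v
    by_cases h0 : q v + ∑ w, f v w = 0
    · have hs : 0 ≤ ∑ w, f v w := Finset.sum_nonneg fun w _ => hf v w
      have hq : q v = 0 := by linarith [hq0 v]
      have hfv : ∀ w, f v w = 0 := by
        intro w
        have hsz : ∑ w, f v w = 0 := by linarith
        exact (Finset.sum_eq_zero_iff_of_nonneg (fun w _ => hf v w)).mp hsz w
          (Finset.mem_univ w)
      simp [h0, hq, hfv]
    · rw [hfix v, mul_add, Finset.mul_sum]
      congr 1
      · rw [hδ]
        by_cases hvy : v = y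
        · subst hvy
          simp only [hδ, hterm, eq_self_iff_true, if_true]
          rw [mul_div_assoc']
          exact mul_div_cancel_left₀ _ h0
        · simp [hvy]
      · refine Finset.sum_congr rfl fun w _ => ?_
        rw [hprob]
        field_simp
  have hsum0 : ∑ v, p v * h v = q y := by
    have e1 : ∀ v, p v * h v
        = ((q v + ∑ w, f v w) * h v) - (∑ u, f u v) * h v := by
      intro v
      linear_combination (h v) * (hcons v)
    calc ∑ v, p v * h v
        = ∑ v, (((if v = y then q v else 0) + ∑ w, f v w * h w)
            - (∑ u, f u v) * h v) := by
          refine Finset.sum_congr rfl fun v _ => ?_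
          rw [e1, hout]
      _ = q y := by
          rw [Finset.sum_sub_distrib, Finset.sum_add_distrib]
          have hc : ∑ v, (∑ u, f u v) * h v = ∑ v : V, ∑ w, f v w * h w := by
            simp_rw [Finset.sum_mul]
            exact Finset.sum_comm
          rw [hc]
          simp [Finset.sum_ite_eq']
  have hinv : ∀ n, a n y + ∑ v, μ n v * h v = q y := by
    intro n
    induction n with
    | zero => rw [ha0, hμ0]; simpa using hsum0
    | succ n ih =>
      rw [ha]
      have e2 : ∑ w, μ (n+1) w * h w = ∑ v, μ n v * (∑ w, prob v w * h w) := by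
        simp_rw [hμ, Finset.sum_mul]
        rw [Finset.sum_comm]
        simp_rw [Finset.mul_sum, mul_assoc]
      have e3 : μ n y * term y = ∑ v, μ n v * δ v := by
        rw [hδ]
        simp [mul_ite, Finset.sum_ite_eq', mul_comm]
      have e4 : ∑ v, μ n v * h v
          = ∑ v, (μ n v * δ v + μ n v * ∑ w, prob v w * h w) := by
        refine Finset.sum_congr rfl fun v _ => ?_
        rw [hfix v, mul_add]
      rw [e4, Finset.sum_add_distrib] at ih
      rw [e2, e3]
      linarith
  have hvan : ∀ n v, μ n v ≠ 0 → n ≤ ord v := by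
    intro n
    induction n with
    | zero => intro v _; exact Nat.zero_le _
    | succ n ih =>
      intro w hw
      rw [hμ] at hw
      obtain ⟨v, -, hv⟩ := Finset.exists_ne_zero_of_sum_ne_zero hw
      have h1 : μ n v ≠ 0 := fun h => hv (by simp [h])
      have h2 : prob v w ≠ 0 := fun h => hv (by simp [h])
      have := ih v h1
      have := hord v w h2
      omega
  have hfin : ∀ n, N + 1 ≤ n → a n y = q y := by
    intro n hn
    have hz : ∑ v, μ n v * h v = 0 := by
      refine Finset.sum_eq_zero fun v _ => ?_
      have hzz : μ n v = 0 := by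
        by_contra hc
        have := hvan n v hc
        have := hbnd v
        omega
      simp [hzz]
    have := hinv n
    linarith
  exact Tendsto.congr'
    (eventually_atTop.mpr ⟨N+1, fun n hn => (hfin n hn).symm⟩) tendsto_const_nhds
end
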